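/- Let D be a closed convex subset of the closed unit disc in ℂ with 1 ∈ D, define h̄(α) = (1/2π)∫₀^{2π} max_{δ ∈ D} Re((1−δ)(α − e^{−iθ})) dθ for α ∈ [0,1], let ν = max_{δ ∈ D}(1 − Re δ), and let κ be the largest α ∈ [0,1] with h̄(α) ≤ 1, when such α exists. Then: (i) h̄ is continuous, increasing, and convex on [0,1]; (ii) if h̄(0) ≤ 1 then κ exists and κ ≥ min(1, (1 − h̄(0))/(h̄(1) − h̄(0))) whenever h̄(1) > h̄(0); (iii) κν ≤ 1; and (iv) κν = 1 if and only if D = [0,1]. -/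

import Mathlib

open scoped Real

/-- **Lemma 1.1**: for a nonempty closed convex `D ⊆ {|z| ≤ 1}` with `1 ∈ D`,
`h̄(α) = (1/2π)∫₀^{2π} max_{δ∈D} Re((1−δ)(α−e^{−iθ})) dθ` and
`ν = max_{δ∈D}(1 − Re δ)`:
(i) `h̄` is continuous, increasing and convex on `[0,1]`;
(ii) if `h̄(0) ≤ 1` then `κ`, the largest `α ∈ [0,1]` with `h̄(α) ≤ 1`, exists, and
`κ ≥ min(1, (1−h̄(0))/(h̄(1)−h̄(0)))` whenever `h̄(1) > h̄(0)`;
(iii) `κν ≤ 1`; (iv) `κν = 1` iff `D = [0,1]`. -/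
theorem geometry_of_convex_region
    (D : Set ℂ) (hDne : D.Nonempty) (hDclosed : IsClosed D) (hDconv : Convex ℝ D)
    (hDsub : D ⊆ Metric.closedBall 0 1) (hD1 : (1 : ℂ) ∈ D)
    (hbar : ℝ → ℝ)
    (hhbar : ∀ α : ℝ, hbar α = (1 / (2 * Real.pi)) *
      ∫ θ in (0 : ℝ)..(2 * Real.pi),
        sSup ((fun δ : ℂ =>
          ((1 - δ) * ((α : ℂ) - Complex.exp (-(Complex.I * θ)))).re) '' D))
    (ν : ℝ) (hν : IsGreatest ((fun δ : ℂ => 1 - δ.re) '' D) ν) :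
    (ContinuousOn hbar (Set.Icc 0 1) ∧ MonotoneOn hbar (Set.Icc 0 1) ∧
      ConvexOn ℝ (Set.Icc (0 : ℝ) 1) hbar)
    ∧ (hbar 0 ≤ 1 →
        (∃ κ : ℝ, IsGreatest {α : ℝ | α ∈ Set.Icc (0 : ℝ) 1 ∧ hbar α ≤ 1} κ) ∧
        (∀ κ : ℝ, IsGreatest {α : ℝ | α ∈ Set.Icc (0 : ℝ) 1 ∧ hbar α ≤ 1} κ →
          hbar 0 < hbar 1 →
            min 1 ((1 - hbar 0) / (hbar 1 - hbar 0)) ≤ κ))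
    ∧ (∀ κ : ℝ, IsGreatest {α : ℝ | α ∈ Set.Icc (0 : ℝ) 1 ∧ hbar α ≤ 1} κ →
        κ * ν ≤ 1 ∧ (κ * ν = 1 ↔ D = (fun r : ℝ => (r : ℂ)) '' Set.Icc (0 : ℝ) 1)) := by
  have hπ : (0:ℝ) < π := Real.pi_pos
  set e : ℝ → ℂ := fun θ => Complex.exp (-(Complex.I * θ)) with he_def
  set F : ℂ → ℝ → ℝ → ℝ := fun δ α θ => ((1 - δ) * ((α : ℂ) - e θ)).re with hF_def
  set g : ℝ → ℝ → ℝ := fun α θ => sSup ((fun δ => F δ α θ) '' D) with hg_def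
  have hhbar' : ∀ α : ℝ, hbar α = (1 / (2 * π)) * ∫ θ in (0:ℝ)..(2*π), g α θ :=
    fun α => hhbar α
  have hK : IsCompact D := (isCompact_closedBall (0:ℂ) 1).of_isClosed_subset hDclosed hDsub
  have hFc : Continuous fun p : (ℝ × ℝ) × ℂ => F p.2 p.1.1 p.1.2 := by
    simp only [hF_def, he_def]; fun_prop
  have hGc : Continuous fun p : ℝ × ℝ => g p.1 p.2 :=
    hK.continuous_sSup (f := fun p : ℝ × ℝ => fun δ : ℂ => F δ p.1 p.2) hFc
  have hgreat : ∀ α θ : ℝ, IsGreatest ((fun δ => F δ α θ) '' D) (g α θ) := by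
    intro α θ
    exact (hK.image (by simp only [hF_def, he_def]; fun_prop)).isGreatest_sSup (hDne.image _)
  have hgub : ∀ α θ : ℝ, ∀ δ ∈ D, F δ α θ ≤ g α θ :=
    fun α θ δ hδ => (hgreat α θ).2 ⟨δ, hδ, rfl⟩
  have hgmem : ∀ α θ : ℝ, ∃ δ ∈ D, F δ α θ = g α θ := by
    intro α θ
    obtain ⟨δ, hδ, hδeq⟩ := (hgreat α θ).1
    exact ⟨δ, hδ, hδeq⟩
  -- affine form of F
  have hF : ∀ (δ : ℂ) (α θ : ℝ), F δ α θ = α * (1 - δ).re - ((1 - δ) * e θ).re := by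
    intro δ α θ
    simp only [hF_def, Complex.mul_re, Complex.sub_re, Complex.sub_im,
      Complex.ofReal_re, Complex.ofReal_im]
    ring
  have he_re : ∀ θ : ℝ, (e θ).re = Real.cos θ := by
    intro θ
    have h : e θ = Complex.exp (↑(-θ) * Complex.I) := by
      simp only [he_def]; congr 1; push_cast; ring
    rw [h, Complex.exp_ofReal_mul_I_re, Real.cos_neg]
  have he_im : ∀ θ : ℝ, (e θ).im = -Real.sin θ := by
    intro θ
    have h : e θ = Complex.exp (↑(-θ) * Complex.I) := by
      simp only [he_def]; congr 1; push_cast; ring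
    rw [h, Complex.exp_ofReal_mul_I_im, Real.sin_neg]
  have hδabs : ∀ δ ∈ D, ‖δ‖ ≤ 1 := by
    intro δ hδ
    have := hDsub hδ
    simpa [Complex.dist_eq] using Metric.mem_closedBall.mp this
  have habs1δ : ∀ δ ∈ D, ‖1 - δ‖ ≤ 2 := by
    intro δ hδ
    have h1 : ‖1 - δ‖ ≤ ‖(1:ℂ)‖ + ‖δ‖ := by
      simpa [sub_eq_add_neg] using norm_sub_le (1:ℂ) δ
    have := hδabs δ hδ
    simp only [norm_one] at h1
    linarith
  have hre1 : ∀ δ ∈ D, 0 ≤ (1 - δ).re := by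
    intro δ hδ
    have h1 : δ.re ≤ 1 := le_trans (Complex.re_le_norm δ) (hδabs δ hδ)
    simp only [Complex.sub_re, Complex.one_re]
    linarith
  -- pointwise properties of g
  have hg0 : ∀ α θ : ℝ, 0 ≤ g α θ := by
    intro α θ
    have := hgub α θ 1 hD1
    simpa [hF_def] using this
  have hgmono : ∀ θ : ℝ, Monotone (fun α => g α θ) := by
    intro θ α β hαβ
    show g α θ ≤ g β θ
    obtain ⟨δ, hδD, hδeq⟩ := hgmem α θ
    rw [← hδeq]
    refine le_trans ?_ (hgub β θ δ hδD)
    rw [hF δ α θ, hF δ β θ]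
    have := hre1 δ hδD
    nlinarith
  have hglip : ∀ (θ α β : ℝ), g α θ ≤ g β θ + 2 * |α - β| := by
    intro θ α β
    obtain ⟨δ, hδD, hδeq⟩ := hgmem α θ
    rw [← hδeq]
    have h1 : F δ α θ = F δ β θ + (α - β) * (1 - δ).re := by
      rw [hF δ α θ, hF δ β θ]; ring
    have h2 : |(1 - δ).re| ≤ 2 := le_trans (Complex.abs_re_le_norm _) (habs1δ δ hδD)
    have h3 : (α - β) * (1 - δ).re ≤ 2 * |α - β| := by
      calc (α - β) * (1 - δ).re ≤ |(α - β) * (1 - δ).re| := le_abs_self _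
        _ = |α - β| * |(1 - δ).re| := abs_mul _ _
        _ ≤ |α - β| * 2 := mul_le_mul_of_nonneg_left h2 (abs_nonneg _)
        _ = 2 * |α - β| := mul_comm _ _
    have h4 := hgub β θ δ hδD
    linarith
  have hgconv : ∀ (θ α β a b : ℝ), 0 ≤ a → 0 ≤ b → a + b = 1 →
      g (a*α + b*β) θ ≤ a * g α θ + b * g β θ := by
    intro θ α β a b ha hb hab
    obtain ⟨δ, hδD, hδeq⟩ := hgmem (a*α + b*β) θ
    rw [← hδeq]
    have h1 : F δ (a*α + b*β) θ = a * F δ α θ + b * F δ β θ := by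
      rw [hF δ (a*α+b*β) θ, hF δ α θ, hF δ β θ]
      linear_combination ((1 - δ) * e θ).re * hab
    rw [h1]
    have := mul_le_mul_of_nonneg_left (hgub α θ δ hδD) ha
    have := mul_le_mul_of_nonneg_left (hgub β θ δ hδD) hb
    linarith
  have hgθc : ∀ α : ℝ, Continuous (g α) := by
    intro α
    exact hGc.comp (continuous_const.prodMk continuous_id)
  have hgint : ∀ α : ℝ, IntervalIntegrable (g α) MeasureTheory.volume 0 (2*π) :=
    fun α => (hgθc α).intervalIntegrable _ _
  have hc : (0:ℝ) < 1 / (2*π) := by positivity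
  have h02π : (0:ℝ) ≤ 2*π := by linarith
  -- hbar monotone
  have hbarmono : Monotone hbar := by
    intro α β hαβ
    rw [hhbar' α, hhbar' β]
    have := intervalIntegral.integral_mono_on h02π (hgint α) (hgint β)
      (fun θ _ => hgmono θ hαβ)
    exact mul_le_mul_of_nonneg_left this hc.le
  -- hbar lipschitz / continuous
  have hbarlip : ∀ α β : ℝ, |hbar α - hbar β| ≤ 2 * |α - β| := by
    intro α β
    rw [hhbar' α, hhbar' β, ← mul_sub,
      ← intervalIntegral.integral_sub (hgint α) (hgint β)]
    have hb : ∀ θ ∈ Set.uIoc (0:ℝ) (2*π), ‖g α θ - g β θ‖ ≤ 2 * |α - β| := by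
      intro θ _
      rw [Real.norm_eq_abs, abs_le]
      constructor
      · have := hglip θ β α; rw [abs_sub_comm β α] at this; linarith
      · have := hglip θ α β; linarith
    have := intervalIntegral.norm_integral_le_of_norm_le_const hb
    rw [abs_mul]
    rw [Real.norm_eq_abs] at this
    have h2 : |(2*π) - 0| = 2*π := by rw [sub_zero, abs_of_nonneg h02π]
    rw [h2] at this
    calc |1/(2*π)| * |∫ θ in (0:ℝ)..(2*π), (g α θ - g β θ)|
        ≤ |1/(2*π)| * (2 * |α - β| * (2*π)) := by
          exact mul_le_mul_of_nonneg_left this (abs_nonneg _)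
      _ = 2 * |α - β| := by
          rw [abs_of_nonneg hc.le]; field_simp
  have hbarcont : Continuous hbar := by
    refine Metric.continuous_iff.mpr (fun x ε hε => ⟨ε/2, by linarith, fun y hy => ?_⟩)
    have := hbarlip y x
    rw [Real.dist_eq] at hy ⊢
    linarith
  -- convexity of hbar on Icc
  have hbarconv : ConvexOn ℝ (Set.Icc (0:ℝ) 1) hbar := by
    refine ⟨convex_Icc 0 1, fun x _ y _ a b ha hb hab => ?_⟩
    simp only [smul_eq_mul]
    rw [hhbar' (a*x + b*y), hhbar' x, hhbar' y]
    have hint : IntervalIntegrable (fun θ => a * g x θ + b * g y θ)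
        MeasureTheory.volume 0 (2*π) :=
      ((hgint x).const_mul a).add ((hgint y).const_mul b)
    have h1 := intervalIntegral.integral_mono_on h02π (hgint (a*x+b*y)) hint
      (fun θ _ => hgconv θ x y a b ha hb hab)
    rw [intervalIntegral.integral_add ((hgint x).const_mul a) ((hgint y).const_mul b),
      intervalIntegral.integral_const_mul, intervalIntegral.integral_const_mul] at h1
    calc (1/(2*π)) * ∫ θ in (0:ℝ)..(2*π), g (a*x+b*y) θ
        ≤ (1/(2*π)) * (a * (∫ θ in (0:ℝ)..(2*π), g x θ)
            + b * (∫ θ in (0:ℝ)..(2*π), g y θ)) := mul_le_mul_of_nonneg_left h1 hc.le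
      _ = a * ((1/(2*π)) * ∫ θ in (0:ℝ)..(2*π), g x θ)
            + b * ((1/(2*π)) * ∫ θ in (0:ℝ)..(2*π), g y θ) := by ring
  -- integral of F δ α
  have hFθc : ∀ (δ : ℂ) (α : ℝ), Continuous (fun θ => F δ α θ) := by
    intro δ α
    simp only [hF_def, he_def]; fun_prop
  have hFint : ∀ (δ : ℂ) (α : ℝ),
      (∫ θ in (0:ℝ)..(2*π), F δ α θ) = 2*π*(α*(1-δ).re) := by
    intro δ α
    have hcongr : Set.EqOn (fun θ => F δ α θ)
        (fun θ => α*(1-δ).re - ((1-δ).re * Real.cos θ + (1-δ).im * Real.sin θ))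
        (Set.uIcc (0:ℝ) (2*π)) := by
      intro θ _
      show F δ α θ = _
      rw [hF δ α θ, Complex.mul_re, he_re θ, he_im θ]
      ring
    rw [intervalIntegral.integral_congr hcongr]
    have hi1 : IntervalIntegrable (fun θ : ℝ => (1-δ).re * Real.cos θ)
        MeasureTheory.volume 0 (2*π) :=
      (continuous_const.mul Real.continuous_cos).intervalIntegrable _ _
    have hi2 : IntervalIntegrable (fun θ : ℝ => (1-δ).im * Real.sin θ)
        MeasureTheory.volume 0 (2*π) :=
      (continuous_const.mul Real.continuous_sin).intervalIntegrable _ _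
    have e1 : (∫ θ in (0:ℝ)..(2*π), (1-δ).re * Real.cos θ) = 0 := by
      rw [intervalIntegral.integral_const_mul, integral_cos]
      simp [Real.sin_two_pi]
    have e2 : (∫ θ in (0:ℝ)..(2*π), (1-δ).im * Real.sin θ) = 0 := by
      rw [intervalIntegral.integral_const_mul, integral_sin]
      simp [Real.cos_two_pi]
    rw [intervalIntegral.integral_sub intervalIntegrable_const (hi1.add hi2),
      intervalIntegral.integral_add hi1 hi2, e1, e2, intervalIntegral.integral_const]
    simp
    try ring
  -- lower bound: α * ν ≤ hbar α
  obtain ⟨δ₀, hδ₀D, hδ₀⟩ := hν.1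
  have hδ₀re : (1 - δ₀).re = ν := by
    simp only [Complex.sub_re, Complex.one_re]; exact hδ₀
  have hlow : ∀ α : ℝ, α * ν ≤ hbar α := by
    intro α
    rw [hhbar' α]
    have hint := intervalIntegral.integral_mono_on h02π
      ((hFθc δ₀ α).intervalIntegrable _ _) (hgint α) (fun θ _ => hgub α θ δ₀ hδ₀D)
    rw [hFint δ₀ α, hδ₀re] at hint
    calc α * ν = (1/(2*π)) * (2*π*(α*ν)) := by field_simp
      _ ≤ (1/(2*π)) * ∫ θ in (0:ℝ)..(2*π), g α θ := mul_le_mul_of_nonneg_left hint hc.le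
  refine ⟨⟨hbarcont.continuousOn, fun a _ b _ hab => hbarmono hab, hbarconv⟩, ?_, ?_⟩
  · -- part (ii)
    intro h0
    constructor
    · -- existence of κ
      have hScl : IsClosed {α : ℝ | α ∈ Set.Icc (0:ℝ) 1 ∧ hbar α ≤ 1} := by
        have : {α : ℝ | α ∈ Set.Icc (0:ℝ) 1 ∧ hbar α ≤ 1}
            = Set.Icc (0:ℝ) 1 ∩ hbar ⁻¹' Set.Iic 1 := rfl
        rw [this]
        exact isClosed_Icc.inter (isClosed_Iic.preimage hbarcont)
      have hScompact : IsCompact {α : ℝ | α ∈ Set.Icc (0:ℝ) 1 ∧ hbar α ≤ 1} :=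
        isCompact_Icc.of_isClosed_subset hScl (fun x hx => hx.1)
      have hSne : {α : ℝ | α ∈ Set.Icc (0:ℝ) 1 ∧ hbar α ≤ 1}.Nonempty :=
        ⟨0, ⟨le_refl 0, zero_le_one⟩, h0⟩
      exact ⟨_, hScompact.isGreatest_sSup hSne⟩
    · -- lower bound on κ
      intro κ hκ hlt
      set m := min 1 ((1 - hbar 0) / (hbar 1 - hbar 0)) with hm_def
      have hm1 : m ≤ 1 := min_le_left _ _
      have hm0 : 0 ≤ m := le_min zero_le_one
        (div_nonneg (by linarith) (by linarith))
      refine hκ.2 ⟨⟨hm0, hm1⟩, ?_⟩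
      have hcv := hbarconv.2 (Set.left_mem_Icc.mpr zero_le_one)
        (Set.right_mem_Icc.mpr zero_le_one)
        (show (0:ℝ) ≤ 1 - m by linarith) hm0 (by ring)
      simp only [smul_eq_mul, mul_zero, mul_one, zero_add] at hcv
      have hm2 : m ≤ (1 - hbar 0) / (hbar 1 - hbar 0) := min_le_right _ _
      have hm3 : m * (hbar 1 - hbar 0) ≤ 1 - hbar 0 :=
        (le_div_iff₀ (by linarith)).mp hm2
      nlinarith
  · -- parts (iii) and (iv)
    intro κ hκ
    obtain ⟨⟨⟨hκ0, hκ1⟩, hκle⟩, hκub⟩ := hκ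
    have hiii : κ * ν ≤ 1 := le_trans (hlow κ) hκle
    refine ⟨hiii, ?_, ?_⟩
    · -- κν = 1 → D = [0,1]
      intro hκν
      have hκpos : 0 < κ := by
        rcases lt_or_eq_of_le hκ0 with h | h
        · exact h
        · exfalso; rw [← h] at hκν; simp at hκν
      have hbareq : hbar κ = 1 := le_antisymm hκle (by
        calc (1:ℝ) = κ * ν := hκν.symm
          _ ≤ hbar κ := hlow κ)
      have hinteq : (∫ θ in (0:ℝ)..(2*π), g κ θ) = ∫ θ in (0:ℝ)..(2*π), F δ₀ κ θ := by
        rw [hFint δ₀ κ, hδ₀re]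
        have h2 := hhbar' κ
        rw [hbareq] at h2
        have hπ' : (2*π) ≠ 0 := by positivity
        field_simp at h2
        rw [← h2, hκν]; ring
      have hpt : ∀ θ ∈ Set.Icc (0:ℝ) (2*π), g κ θ = F δ₀ κ θ := by
        by_contra hcon
        push_neg at hcon
        obtain ⟨θ₀, hθ₀, hne⟩ := hcon
        have hlt : F δ₀ κ θ₀ < g κ θ₀ :=
          lt_of_le_of_ne (hgub κ θ₀ δ₀ hδ₀D) (Ne.symm hne)
        have hstrict := intervalIntegral.integral_lt_integral_of_continuousOn_of_le_of_exists_lt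
          (by positivity : (0:ℝ) < 2*π) (hFθc δ₀ κ).continuousOn (hgθc κ).continuousOn
          (fun x hx => hgub κ x δ₀ hδ₀D) ⟨θ₀, hθ₀, hlt⟩
        exact hstrict.ne' hinteq
      have hkey : ∀ δ ∈ D, ∃ t : ℝ, 0 ≤ t ∧ δ = δ₀ + (t:ℂ) ∧ (δ ≠ δ₀ → κ = 1) := by
        intro δ hδD
        by_cases hδδ₀ : δ = δ₀
        · exact ⟨0, le_refl 0, by simp [hδδ₀], fun h => absurd hδδ₀ h⟩
        set w := δ₀ - δ with hw
        have hw0 : w ≠ 0 := sub_ne_zero.mpr (fun h => hδδ₀ h.symm)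
        have hwabs : 0 < ‖w‖ := norm_pos_iff.mpr hw0
        set u : ℂ := -((‖w‖ : ℝ) : ℂ) / w with hu
        have huabs : ‖u‖ = 1 := by
          rw [hu, norm_div, norm_neg, Complex.norm_real,
            Real.norm_of_nonneg hwabs.le, div_self hwabs.ne']
        obtain ⟨θ, hθIcc, heθ⟩ : ∃ θ ∈ Set.Icc (0:ℝ) (2*π), e θ = u := by
          set φ := u.arg with hφ_def
          have hφ : Complex.exp (↑φ * Complex.I) = u := by
            have := Complex.norm_mul_exp_arg_mul_I u
            rwa [huabs, Complex.ofReal_one, one_mul] at this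
          have hφ1 : -π < φ := Complex.neg_pi_lt_arg u
          have hφ2 : φ ≤ π := Complex.arg_le_pi u
          by_cases hφ0 : φ ≤ 0
          · refine ⟨-φ, ⟨by linarith, by linarith⟩, ?_⟩
            show Complex.exp (-(Complex.I * ↑(-φ))) = u
            have h : -(Complex.I * ((-φ:ℝ):ℂ)) = ↑φ * Complex.I := by push_cast; ring
            rw [h, hφ]
          · refine ⟨2*π - φ, ⟨by linarith, by linarith⟩, ?_⟩
            show Complex.exp (-(Complex.I * ↑(2*π - φ))) = u
            have h : -(Complex.I * ((2*π - φ:ℝ):ℂ)) = ↑φ * Complex.I - 2*↑π*Complex.I := by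
              push_cast; ring
            rw [h, Complex.exp_sub, Complex.exp_two_pi_mul_I, div_one, hφ]
        have h1 : F δ κ θ ≤ F δ₀ κ θ := by
          have := hgub κ θ δ hδD
          rwa [hpt θ hθIcc] at this
        have h2 : (w * ((κ:ℂ) - e θ)).re ≤ 0 := by
          have heq : (w * ((κ:ℂ) - e θ)).re = F δ κ θ - F δ₀ κ θ := by
            simp only [hF_def, hw]
            rw [← Complex.sub_re, ← sub_mul]
            ring_nf
          rw [heq]; linarith
        have h3 : w * e θ = -((‖w‖ : ℝ) : ℂ) := by
          rw [heθ, hu]; field_simp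
        have h4 : κ * w.re + ‖w‖ ≤ 0 := by
          have heq : (w * ((κ:ℂ) - e θ)).re = κ * w.re + ‖w‖ := by
            rw [mul_sub, h3, Complex.sub_re, Complex.neg_re, Complex.ofReal_re]
            simp only [Complex.mul_re, Complex.ofReal_re, Complex.ofReal_im]
            ring
          rw [heq] at h2; exact h2
        have hwre : -(‖w‖) ≤ w.re := by
          have := Complex.abs_re_le_norm w
          rcases abs_le.mp this with ⟨h, _⟩
          linarith
        have hκeq1 : κ = 1 := by
          have hge : 1 ≤ κ := by
            nlinarith [mul_le_mul_of_nonneg_left hwre hκpos.le]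
          exact le_antisymm hκ1 hge
        have hre : w.re = -(‖w‖) := by
          rw [hκeq1] at h4; linarith
        have him : w.im = 0 := by
          have hsq := Complex.sq_norm w
          rw [Complex.normSq_apply] at hsq
          have h5 : w.im^2 = 0 := by nlinarith [hsq, hre]
          exact (pow_eq_zero_iff (two_ne_zero)).mp h5
        refine ⟨‖w‖, hwabs.le, ?_, fun _ => hκeq1⟩
        have hweq : w = -((‖w‖ : ℝ) : ℂ) := by
          apply Complex.ext
          · simp [hre]
          · simp [him]
        have hδw : δ = δ₀ - w := by rw [hw]; ring
        have h6 : δ₀ - w = δ₀ - (-((‖w‖ : ℝ) : ℂ)) := by rw [← hweq]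
        rw [hδw, h6]; ring
      obtain ⟨t1, ht1, h1eq, h1κ⟩ := hkey 1 hD1
      have hδ₀ne1 : (1:ℂ) ≠ δ₀ := by
        intro h
        rw [← h] at hδ₀
        simp only [Complex.one_re, sub_self] at hδ₀
        rw [← hδ₀] at hκν
        simp at hκν
      have hκeq1 : κ = 1 := h1κ hδ₀ne1
      have hνeq1 : ν = 1 := by rw [hκeq1, one_mul] at hκν; exact hκν
      have hδ₀re0 : δ₀.re = 0 := by
        rw [hνeq1] at hδ₀re
        simp only [Complex.sub_re, Complex.one_re] at hδ₀re
        linarith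
      have hδ₀0 : δ₀ = 0 := by
        have h1' := congrArg Complex.im h1eq
        simp only [Complex.one_im, Complex.add_im, Complex.ofReal_im, add_zero] at h1'
        exact Complex.ext hδ₀re0 h1'.symm
      ext δ
      constructor
      · intro hδD
        obtain ⟨t, ht, hteq, -⟩ := hkey δ hδD
        rw [hδ₀0, zero_add] at hteq
        refine ⟨t, ⟨ht, ?_⟩, hteq.symm⟩
        have habs := hδabs δ hδD
        rw [hteq, Complex.norm_real, Real.norm_of_nonneg ht] at habs
        exact habs
      · rintro ⟨r, ⟨hr0, hr1⟩, rfl⟩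
        have h0D : (0:ℂ) ∈ D := hδ₀0 ▸ hδ₀D
        have := hDconv h0D hD1 (by linarith : (0:ℝ) ≤ 1-r) hr0 (by ring)
        simpa [Complex.real_smul] using this
    · -- D = [0,1] → κν = 1
      intro hDeq
      have h0D : (0:ℂ) ∈ D := by
        rw [hDeq]; exact ⟨0, ⟨le_refl 0, zero_le_one⟩, by simp⟩
      have hνeq1 : ν = 1 := by
        refine hν.unique ⟨⟨0, h0D, by simp⟩, ?_⟩
        rintro x ⟨δ, hδ, rfl⟩
        rw [hDeq] at hδ
        obtain ⟨r, ⟨hr0, _⟩, rfl⟩ := hδ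
        simp only [Complex.ofReal_re]
        linarith
      have hg1 : ∀ θ : ℝ, g 1 θ = 1 - Real.cos θ := by
        intro θ
        refine (hgreat 1 θ).unique ⟨⟨0, h0D, ?_⟩, ?_⟩
        · show F 0 1 θ = 1 - Real.cos θ
          rw [hF 0 1 θ, Complex.mul_re, he_re θ, he_im θ]
          simp
        · rintro x ⟨δ, hδ, rfl⟩
          rw [hDeq] at hδ
          obtain ⟨r, ⟨hr0, hr1⟩, rfl⟩ := hδ
          show F (r:ℂ) 1 θ ≤ 1 - Real.cos θ
          rw [hF (r:ℂ) 1 θ, Complex.mul_re, he_re θ, he_im θ]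
          simp only [Complex.sub_re, Complex.sub_im, Complex.one_re, Complex.one_im,
            Complex.ofReal_re, Complex.ofReal_im]
          nlinarith [mul_nonneg hr0 (by linarith [Real.cos_le_one θ] : (0:ℝ) ≤ 1 - Real.cos θ)]
      have hbar1 : hbar 1 = 1 := by
        rw [hhbar' 1]
        rw [intervalIntegral.integral_congr (fun θ _ => hg1 θ)]
        rw [intervalIntegral.integral_sub intervalIntegrable_const
          (Real.continuous_cos.intervalIntegrable _ _),
          intervalIntegral.integral_const, integral_cos]
        simp [Real.sin_two_pi]
        field_simp
      have hκeq1 : κ = 1 := le_antisymm hκ1 (hκub ⟨⟨zero_le_one, le_refl 1⟩, hbar1.le⟩)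
      rw [hκeq1, hνeq1, one_mul]
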